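/- Let ω = e^{iπ/3} ∈ ℂ. If p is a polynomial with integer coefficients such that p(ω) = -1, then p(-1) ≡ -1 (mod 3), i.e. 3 divides p(-1) + 1. -/

import Mathlib

/-!
`ω = exp(πi/3)` is a primitive sixth root of unity, so its minimal polynomial over `ℤ` is
`Φ₆ = X² - X + 1`. Hence `p(ω) = -1` means `Φ₆ ∣ p + 1` in `ℤ[X]`, and evaluating at `-1`,
where `Φ₆(-1) = 3`, gives `3 ∣ p(-1) + 1`.
-/

open Polynomial Complex Real

theorem IsPrimitiveRoot.cyclotomic_dvd_of_aeval_eq_zero {K : Type*} [Field K] [CharZero K]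
    {μ : K} {n : ℕ} (hμ : IsPrimitiveRoot μ n) (hn : 0 < n) {f : ℤ[X]} (hf : aeval μ f = 0) :
    cyclotomic n ℤ ∣ f :=
  cyclotomic_eq_minpoly hμ hn ▸ minpoly.isIntegrallyClosed_dvd (hμ.isIntegral hn) hf

theorem Complex.isPrimitiveRoot_exp_pi_mul_I_div_three :
    IsPrimitiveRoot (exp (π * I / 3)) 6 := by
  convert isPrimitiveRoot_exp 6 (by norm_num) using 2
  push_cast
  ring

theorem Polynomial.eval_neg_one_cyclotomic_six : (cyclotomic 6 ℤ).eval (-1) = 3 := by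
  simp [cyclotomic_six]

theorem stmt_0 (p : Polynomial ℤ)
    (h : Polynomial.aeval (Complex.exp (Real.pi * Complex.I / 3)) p = -1) :
    (3 : ℤ) ∣ p.eval (-1) + 1 := by
  have hroot : aeval (exp (π * I / 3)) (p + 1) = 0 := by simp [h]
  have hdvd : (cyclotomic 6 ℤ).eval (-1) ∣ (p + 1).eval (-1) :=
    eval_dvd (isPrimitiveRoot_exp_pi_mul_I_div_three.cyclotomic_dvd_of_aeval_eq_zero
      (by norm_num) hroot)
  simpa [eval_neg_one_cyclotomic_six] using hdvd
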